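/- arXiv:1608.04508 — 6 statements merged into one kernel-verified Lean document; each statement's English description precedes it below -/
import Mathlib

section
/- The Choi–Jamiołkowski matrix J_α of the channel N_α(ρ) = E_α ρ E_α† + D_α ρ D_α† equals (1+sin²α)|u_α⟩⟨u_α| + (1+cos²α)|v_α⟩⟨v_α|, where |u_α⟩ = (sin α |10⟩ + |21⟩)/√(1+sin²α) and |v_α⟩ = (cos α |12⟩ + |01⟩)/√(1+cos²α). -/
open Matrix Kronecker Complex ComplexOrder

noncomputable section

abbrev M3 : Type := Matrix (Fin 3) (Fin 3) ℂ
abbrev M9 : Type := Matrix (Fin 3 × Fin 3) (Fin 3 × Fin 3) ℂ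

/-- |i⟩⟨j| on ℂ³ -/
def ket (i j : Fin 3) : M3 := Matrix.single i j 1

def E (α : ℝ) : M3 := (Real.sin α : ℂ) • ket 0 1 + ket 1 2
def D (α : ℝ) : M3 := (Real.cos α : ℂ) • ket 2 1 + ket 1 0

def u (α : ℝ) : Fin 3 × Fin 3 → ℂ := fun p =>
  (((if p = (1,0) then Real.sin α else 0) + (if p = (2,1) then 1 else 0)) /
    Real.sqrt (1 + Real.sin α ^ 2) : ℝ)

def v (α : ℝ) : Fin 3 × Fin 3 → ℂ := fun p =>
  (((if p = (1,2) then Real.cos α else 0) + (if p = (0,1) then 1 else 0)) /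
    Real.sqrt (1 + Real.cos α ^ 2) : ℝ)

/-- Projection onto span{|u_α⟩, |v_α⟩}, the support of the Choi matrix of N_α. -/
def Pproj (α : ℝ) : M9 :=
  vecMulVec (u α) (star (u α)) + vecMulVec (v α) (star (v α))

/-- Partial trace over the first (A) factor. -/
def trA (M : M9) : M3 := fun i j => ∑ k, M (k, i) (k, j)

/-- Partial trace over the second (B) factor. -/
def trB (M : M9) : M3 := fun i j => ∑ k, M (i, k) (j, k)

def Nmap (α : ℝ) (ρ : M3) : M3 := E α * ρ * (E α)ᴴ + D α * ρ * (D α)ᴴ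

/-- Choi–Jamiołkowski matrix of N_α. -/
def Choi (α : ℝ) : M9 := ∑ i, ∑ j, (ket i j ⊗ₖ Nmap α (ket i j))

/-! Each Kraus operator `K` contributes `∑ i j, |i⟩⟨j| ⊗ K |i⟩⟨j| Kᴴ = |vec K⟩⟨vec K|` to the
Choi matrix, and `vec (E α)`, `vec (D α)` are the unnormalised vectors `√(1 + sin² α) • u α` and
`√(1 + cos² α) • v α`. -/

theorem sum_single_kronecker_mul_single_mul_conjTranspose {m n R : Type*} [Fintype n]
    [DecidableEq n] [Semiring R] [StarRing R] (K : Matrix m n R) :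
    ∑ i, ∑ j, single i j (1 : R) ⊗ₖ (K * single i j (1 : R) * Kᴴ) =
      vecMulVec (vec K) (star (vec K)) := by
  ext ⟨a, b⟩ ⟨c, d⟩
  simp [Matrix.sum_apply, kroneckerMap_apply, single_apply, mul_apply, vec, vecMulVec_apply,
    ite_and]

theorem vecMulVec_ofReal_smul_self_star {ι : Type*} (r : ℝ) (x : ι → ℂ) :
    vecMulVec ((r : ℂ) • x) (star ((r : ℂ) • x)) = ((r ^ 2 : ℝ) : ℂ) • vecMulVec x (star x) := by
  rw [star_smul, smul_vecMulVec, vecMulVec_smul, smul_smul, Complex.star_def, Complex.conj_ofReal,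
    ← ofReal_mul, sq]

theorem choi_eq_vecMulVec_vec (α : ℝ) :
    Choi α = vecMulVec (vec (E α)) (star (vec (E α))) +
      vecMulVec (vec (D α)) (star (vec (D α))) := by
  simp only [Choi, Nmap, kronecker_add, Finset.sum_add_distrib, ket,
    ← sum_single_kronecker_mul_single_mul_conjTranspose]

theorem vec_E_eq_smul_u (α : ℝ) : vec (E α) = (√(1 + Real.sin α ^ 2) : ℂ) • u α := by
  have hnorm : √(1 + Real.sin α ^ 2) ≠ 0 := by positivity
  ext ⟨a, b⟩
  simp only [u, Pi.smul_apply, smul_eq_mul, ← ofReal_mul, mul_div_cancel₀ _ hnorm]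
  fin_cases a <;> fin_cases b <;> simp [vec, E, ket]

theorem vec_D_eq_smul_v (α : ℝ) : vec (D α) = (√(1 + Real.cos α ^ 2) : ℂ) • v α := by
  have hnorm : √(1 + Real.cos α ^ 2) ≠ 0 := by positivity
  ext ⟨a, b⟩
  simp only [v, Pi.smul_apply, smul_eq_mul, ← ofReal_mul, mul_div_cancel₀ _ hnorm]
  fin_cases a <;> fin_cases b <;> simp [vec, D, ket]

theorem choi_eq_general (α : ℝ) :
    Choi α = ((1 + Real.sin α ^ 2 : ℝ) : ℂ) • vecMulVec (u α) (star (u α)) +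
      ((1 + Real.cos α ^ 2 : ℝ) : ℂ) • vecMulVec (v α) (star (v α)) := by
  rw [choi_eq_vecMulVec_vec, vec_E_eq_smul_u, vec_D_eq_smul_v, vecMulVec_ofReal_smul_self_star,
    vecMulVec_ofReal_smul_self_star, Real.sq_sqrt (by positivity), Real.sq_sqrt (by positivity)]

theorem choi_eq (α : ℝ) (hα : 0 < α) (hα' : α ≤ Real.pi / 4) :
    Choi α = ((1 + Real.sin α ^ 2 : ℝ) : ℂ) • vecMulVec (u α) (star (u α)) +
      ((1 + Real.cos α ^ 2 : ℝ) : ℂ) • vecMulVec (v α) (star (v α)) :=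
  choi_eq_general α
end
end

section
/- For 0 < α ≤ π/4, let R_A = 2(cos²α |0⟩⟨0| + |1⟩⟨1| + sin²α |2⟩⟨2|) and U_{AB} = cos²α |01⟩⟨01| + sin²α |21⟩⟨21| + |10⟩⟨10| + |12⟩⟨12| + sin α (|10⟩⟨21| + |21⟩⟨10|) + cos α (|01⟩⟨12| + |12⟩⟨01|). Then U_{AB} ≥ 0, R_A ⊗ I − U_{AB} ≥ 0, tr_A U_{AB} = I_B, and P_α (R_A ⊗ I_B − U_{AB}) = 0, where P_α is the projection onto the support of the Choi matrix of N_α. Moreover tr R_A = 4. -/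
open Matrix Kronecker Complex ComplexOrder

noncomputable section

def RA (α : ℝ) : M3 :=
  (2 * Real.cos α ^ 2 : ℂ) • ket 0 0 + (2 : ℂ) • ket 1 1 + (2 * Real.sin α ^ 2 : ℂ) • ket 2 2

def UAB (α : ℝ) : M9 :=
  (Real.cos α ^ 2 : ℂ) • (ket 0 0 ⊗ₖ ket 1 1) + (Real.sin α ^ 2 : ℂ) • (ket 2 2 ⊗ₖ ket 1 1) +
  ket 1 1 ⊗ₖ ket 0 0 + ket 1 1 ⊗ₖ ket 2 2 +
  (Real.sin α : ℂ) • (ket 1 2 ⊗ₖ ket 0 1 + ket 2 1 ⊗ₖ ket 1 0) +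
  (Real.cos α : ℂ) • (ket 0 1 ⊗ₖ ket 1 2 + ket 1 0 ⊗ₖ ket 2 1)

/-!
Both matrices are explicit sums of positive pieces. With `x± = cos α |01⟩ ± |12⟩` and
`y± = |10⟩ ± sin α |21⟩`, one has `U_AB = |x₊⟩⟨x₊| + |y₊⟩⟨y₊|` and
`R_A ⊗ I − U_AB = Δ + |x₋⟩⟨x₋| + |y₋⟩⟨y₋|` with `Δ` diagonal and nonnegative. The vectors
`u_α` and `v_α` are orthogonal to `x₋` and `y₋` and supported where `Δ` vanishes, so they lie in
the kernel of `R_A ⊗ I − U_AB`. The trace identities reduce to `sin² α + cos² α = 1`.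
-/

section

variable {n R : Type*} [Fintype n] [DecidableEq n] [Semiring R]

theorem vecMul_diagonal_add_vecMulVec_add_vecMulVec_eq_zero {x d a a' b b' : n → R}
    (hd : ∀ p, x p * d p = 0) (ha : x ⬝ᵥ a = 0) (hb : x ⬝ᵥ b = 0) :
    x ᵥ* (diagonal d + vecMulVec a a' + vecMulVec b b') = 0 := by
  ext p
  simp [vecMul_add, vecMul_vecMulVec, ha, hb, vecMul_diagonal, hd]

end

def cosVec (α : ℝ) (s : ℂ) : Fin 3 × Fin 3 → ℂ := fun p =>
  if p = (0,1) then (Real.cos α : ℂ) else if p = (1,2) then s else 0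

def sinVec (α : ℝ) (s : ℂ) : Fin 3 × Fin 3 → ℂ := fun p =>
  if p = (1,0) then 1 else if p = (2,1) then s * (Real.sin α : ℂ) else 0

def slackDiag (α : ℝ) : Fin 3 × Fin 3 → ℝ := fun p =>
  if p ∈ ({(0,1), (1,0), (1,2), (2,1)} : Finset (Fin 3 × Fin 3)) then 0
  else 2 * ![Real.cos α ^ 2, 1, Real.sin α ^ 2] p.1

lemma slackDiag_nonneg (α : ℝ) (p : Fin 3 × Fin 3) : 0 ≤ slackDiag α p := by
  unfold slackDiag
  split_ifs
  · exact le_rfl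
  · fin_cases p <;> simp <;> positivity

lemma UAB_eq_sum_vecMulVec (α : ℝ) :
    UAB α = vecMulVec (cosVec α 1) (star (cosVec α 1)) +
      vecMulVec (sinVec α 1) (star (sinVec α 1)) := by
  ext ⟨i, j⟩ ⟨k, l⟩
  fin_cases i <;> fin_cases j <;> fin_cases k <;> fin_cases l <;>
    simp [UAB, ket, cosVec, sinVec, vecMulVec_apply, sq, -Complex.ofReal_cos, -Complex.ofReal_sin]

lemma RA_kronecker_one_sub_UAB_eq (α : ℝ) :
    RA α ⊗ₖ (1 : M3) - UAB α = diagonal (fun p => (slackDiag α p : ℂ)) +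
      vecMulVec (cosVec α (-1)) (star (cosVec α (-1))) +
      vecMulVec (sinVec α (-1)) (star (sinVec α (-1))) := by
  ext ⟨i, j⟩ ⟨k, l⟩
  fin_cases i <;> fin_cases j <;> fin_cases k <;> fin_cases l <;>
    simp [RA, UAB, ket, slackDiag, cosVec, sinVec, vecMulVec_apply, one_apply, sq,
      -Complex.ofReal_cos, -Complex.ofReal_sin] <;> ring

lemma star_u_vecMul_RA_kronecker_one_sub_UAB (α : ℝ) :
    star (u α) ᵥ* (RA α ⊗ₖ (1 : M3) - UAB α) = 0 := by
  rw [RA_kronecker_one_sub_UAB_eq]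
  apply vecMul_diagonal_add_vecMulVec_add_vecMulVec_eq_zero
  · rintro ⟨i, j⟩
    fin_cases i <;> fin_cases j <;> simp [u, slackDiag]
  · simp [dotProduct, Fintype.sum_prod_type, Fin.sum_univ_three, u, cosVec]
  · simp [dotProduct, Fintype.sum_prod_type, Fin.sum_univ_three, u, sinVec, div_eq_inv_mul]

lemma star_v_vecMul_RA_kronecker_one_sub_UAB (α : ℝ) :
    star (v α) ᵥ* (RA α ⊗ₖ (1 : M3) - UAB α) = 0 := by
  rw [RA_kronecker_one_sub_UAB_eq]
  apply vecMul_diagonal_add_vecMulVec_add_vecMulVec_eq_zero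
  · rintro ⟨i, j⟩
    fin_cases i <;> fin_cases j <;> simp [v, slackDiag]
  · simp [dotProduct, Fintype.sum_prod_type, Fin.sum_univ_three, v, cosVec, div_eq_inv_mul]
  · simp [dotProduct, Fintype.sum_prod_type, Fin.sum_univ_three, v, sinVec]

lemma trA_UAB (α : ℝ) : trA (UAB α) = 1 := by
  ext i j
  fin_cases i <;> fin_cases j <;>
    simp [trA, UAB, ket, Fin.sum_univ_three, one_apply]

lemma trace_RA (α : ℝ) : (RA α).trace = 4 := by
  simp [trace, RA, ket, Fin.sum_univ_three, ← mul_add, add_right_comm _ (2 : ℂ),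
    show (2 + 2 : ℂ) = 4 by norm_num]

theorem ns_capacity_feasible_general (α : ℝ) :
    (UAB α).PosSemidef ∧
    (RA α ⊗ₖ (1 : M3) - UAB α).PosSemidef ∧
    trA (UAB α) = 1 ∧
    Pproj α * (RA α ⊗ₖ (1 : M3) - UAB α) = 0 ∧
    (RA α).trace = 4 := by
  refine ⟨?_, ?_, trA_UAB α, ?_, trace_RA α⟩
  · rw [UAB_eq_sum_vecMulVec]
    exact (posSemidef_vecMulVec_self_star _).add (posSemidef_vecMulVec_self_star _)
  · have hdiag : (diagonal fun p => (slackDiag α p : ℂ)).PosSemidef :=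
      posSemidef_diagonal_iff.mpr fun p => Complex.zero_le_real.mpr (slackDiag_nonneg α p)
    rw [RA_kronecker_one_sub_UAB_eq]
    exact (hdiag.add (posSemidef_vecMulVec_self_star _)).add (posSemidef_vecMulVec_self_star _)
  · rw [Pproj, add_mul, vecMulVec_mul, vecMulVec_mul, star_u_vecMul_RA_kronecker_one_sub_UAB,
      star_v_vecMul_RA_kronecker_one_sub_UAB]
    ext
    simp

theorem ns_capacity_feasible (α : ℝ) (hα : 0 < α) (hα' : α ≤ Real.pi / 4) :
    (UAB α).PosSemidef ∧
    (RA α ⊗ₖ (1 : M3) - UAB α).PosSemidef ∧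
    trA (UAB α) = 1 ∧
    Pproj α * (RA α ⊗ₖ (1 : M3) - UAB α) = 0 ∧
    (RA α).trace = 4 :=
  ns_capacity_feasible_general α
end
end

section
/- For 0 < α ≤ π/4, the no-signalling-assisted one-shot zero-error capacity SDP value Υ(N_α) equals 4, i.e., the maximum of tr R_A over R_A, U_{AB} with 0 ≤ U_{AB} ≤ R_A ⊗ I_B, tr_A U_{AB} = I_B, and tr P_α(R_A ⊗ I_B − U_{AB}) = 0 equals 4. -/
open Matrix Kronecker Complex ComplexOrder

noncomputable section

/-! If `J` is the Choi matrix of a trace-preserving map (`tr_B J = I`) and `I ⊗ T ≥ J`, every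
feasible `(R, U)` with `tr (J (R ⊗ I - U)) = 0` satisfies
`tr R = tr (J (R ⊗ I)) = tr (J U) ≤ tr ((I ⊗ T) U) = tr (T tr_A U) = tr T`.
As `J_α` and `P_α` have the same support, the zero-error condition gives `tr (J_α (R ⊗ I - U)) = 0`,
and `T = diag(2 sin² α, 2, 2 cos² α)` gives the bound 4. It is attained by
`R = diag(2 cos² α, 2, 2 sin² α)` and `U = |x⟩⟨x| + |y⟩⟨y|` with `x = |10⟩ + sin α |21⟩`,
`y = |12⟩ + cos α |01⟩`. Both semidefiniteness certificates come from `|a⟩⟨a| ≤ 2 diag(|aᵢ|²)`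
for vectors `a` with two nonzero entries. -/

section
variable {ι : Type*}

def rankTwo (a b : ι → ℂ) : Matrix ι ι ℂ := vecMulVec a (star a) + vecMulVec b (star b)

def twoPoint [DecidableEq ι] (p q : ι) (x y : ℂ) : ι → ℂ := Pi.single p x + Pi.single q y

lemma vecMulVec_twoPoint_add_vecMulVec_twoPoint_neg [DecidableEq ι] {p q : ι} (hpq : p ≠ q)
    (x y : ℂ) :
    vecMulVec (twoPoint p q x y) (star (twoPoint p q x y)) +
      vecMulVec (twoPoint p q x (-y)) (star (twoPoint p q x (-y))) =
      diagonal fun i => 2 * ((‖twoPoint p q x y i‖ ^ 2 : ℝ) : ℂ) := by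
  ext i j
  simp only [twoPoint, Matrix.add_apply, vecMulVec_apply, diagonal_apply, Pi.add_apply,
    Pi.star_apply, Pi.single_apply]
  by_cases hip : i = p <;> by_cases hiq : i = q <;> by_cases hjp : j = p <;>
    by_cases hjq : j = q <;> subst_vars <;> simp_all [eq_comm, ← Complex.mul_conj'] <;> ring

variable [Fintype ι]

lemma trace_vecMulVec_mul (a b : ι → ℂ) (M : Matrix ι ι ℂ) :
    (vecMulVec a b * M).trace = b ⬝ᵥ M *ᵥ a := by
  simp only [trace, diag, mul_apply, vecMulVec_apply, dotProduct, mulVec, Finset.mul_sum]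
  rw [Finset.sum_comm]
  exact Finset.sum_congr rfl fun _ _ => Finset.sum_congr rfl fun _ _ => by ring

lemma posSemidef_rankTwo (a b : ι → ℂ) : (rankTwo a b).PosSemidef :=
  (posSemidef_vecMulVec_self_star a).add (posSemidef_vecMulVec_self_star b)

lemma trace_rankTwo_mul (a b : ι → ℂ) (M : Matrix ι ι ℂ) :
    (rankTwo a b * M).trace = star a ⬝ᵥ M *ᵥ a + star b ⬝ᵥ M *ᵥ b := by
  rw [rankTwo, add_mul, trace_add, trace_vecMulVec_mul, trace_vecMulVec_mul]

lemma Matrix.PosSemidef.trace_mul_nonneg [DecidableEq ι] {A B : Matrix ι ι ℂ}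
    (hA : A.PosSemidef) (hB : B.PosSemidef) : 0 ≤ (A * B).trace := by
  obtain ⟨m, a, rfl⟩ := posSemidef_iff_eq_sum_vecMulVec.mp hA
  rw [Finset.sum_mul, trace_sum]
  exact Finset.sum_nonneg fun i _ => by
    rw [trace_vecMulVec_mul]
    exact hB.dotProduct_mulVec_nonneg _

lemma Matrix.PosSemidef.trace_rankTwo_smul_mul_eq_zero {Δ : Matrix ι ι ℂ} (hΔ : Δ.PosSemidef)
    {a b : ι → ℂ} (h : (rankTwo a b * Δ).trace = 0) (k l : ℂ) :
    (rankTwo (k • a) (l • b) * Δ).trace = 0 := by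
  rw [trace_rankTwo_mul] at h ⊢
  obtain ⟨ha, hb⟩ := (add_eq_zero_iff_of_nonneg (hΔ.dotProduct_mulVec_nonneg a)
    (hΔ.dotProduct_mulVec_nonneg b)).1 h
  simp [star_smul, smul_dotProduct, mulVec_smul, dotProduct_smul, ha, hb]

lemma posSemidef_diagonal_sub_rankTwo_twoPoint [DecidableEq ι] {p q p' q' : ι} (hpq : p ≠ q)
    (hpq' : p' ≠ q') (x y x' y' : ℂ) (d : ι → ℝ)
    (hd : ∀ i, 2 * (‖twoPoint p q x y i‖ ^ 2 + ‖twoPoint p' q' x' y' i‖ ^ 2) ≤ d i) :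
    (diagonal (fun i => (d i : ℂ)) -
      rankTwo (twoPoint p q x y) (twoPoint p' q' x' y')).PosSemidef := by
  set r : ι → ℝ := fun i => d i - 2 * (‖twoPoint p q x y i‖ ^ 2 + ‖twoPoint p' q' x' y' i‖ ^ 2)
  have hsplit : diagonal (fun i => (d i : ℂ)) - rankTwo (twoPoint p q x y) (twoPoint p' q' x' y') =
      rankTwo (twoPoint p q x (-y)) (twoPoint p' q' x' (-y')) + diagonal (fun i => (r i : ℂ)) := by
    rw [rankTwo, rankTwo,
      eq_sub_of_add_eq (vecMulVec_twoPoint_add_vecMulVec_twoPoint_neg hpq x y),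
      eq_sub_of_add_eq (vecMulVec_twoPoint_add_vecMulVec_twoPoint_neg hpq' x' y')]
    ext i j
    simp only [r, diagonal_apply, Matrix.sub_apply, Matrix.add_apply]
    split_ifs <;> push_cast <;> ring
  rw [hsplit]
  exact (posSemidef_rankTwo _ _).add
    (posSemidef_diagonal_iff.2 fun i => Complex.zero_le_real.2 (sub_nonneg.2 (hd i)))

end

lemma trace_mul_kronecker_one (J : M9) (R : M3) :
    (J * (R ⊗ₖ (1 : M3))).trace = (trB J * R).trace := by
  simp only [trace, diag, mul_apply, kroneckerMap_apply, one_apply, trB, Fintype.sum_prod_type,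
    mul_ite, mul_one, mul_zero, Finset.sum_ite_eq', Finset.mem_univ, if_true, Finset.sum_mul]
  exact Finset.sum_congr rfl fun _ _ => Finset.sum_comm

lemma trace_one_kronecker_mul (T : M3) (U : M9) :
    ((1 : M3) ⊗ₖ T * U).trace = (T * trA U).trace := by
  rw [trace_mul_comm]
  simp only [trace, diag_apply, mul_apply, kroneckerMap_apply, one_apply, ite_mul, one_mul,
    zero_mul, mul_ite, mul_zero, Fintype.sum_prod_type, Finset.sum_ite_irrel,
    Finset.sum_const_zero, Finset.sum_ite_eq', Finset.mem_univ, if_true, trA, Finset.mul_sum]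
  rw [Finset.sum_comm]
  refine (Finset.sum_congr rfl fun _ _ => Finset.sum_comm).trans ?_
  rw [Finset.sum_comm]
  simp only [mul_comm]

theorem trace_le_trace_of_dual_feasible {R T : M3} {U J : M9} (hU : U.PosSemidef)
    (hU₁ : trA U = 1) (hJ₁ : trB J = 1) (hTJ : ((1 : M3) ⊗ₖ T - J).PosSemidef)
    (hJ : (J * (R ⊗ₖ (1 : M3) - U)).trace = 0) : R.trace ≤ T.trace := by
  have hJR : (J * (R ⊗ₖ (1 : M3))).trace = R.trace := by
    rw [trace_mul_kronecker_one, hJ₁, one_mul]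
  have hTU : ((1 : M3) ⊗ₖ T * U).trace = T.trace := by
    rw [trace_one_kronecker_mul, hU₁, mul_one]
  have hslack := hTJ.trace_mul_nonneg hU
  rw [mul_sub, trace_sub, hJR, sub_eq_zero] at hJ
  rw [sub_mul, trace_sub, hTU, ← hJ] at hslack
  exact sub_nonneg.1 hslack

/-- Vectorization with the input system `A` as first factor, so that the Choi matrix
`∑ |i⟩⟨j| ⊗ N(|i⟩⟨j|)` of the channel with Kraus operators `K` is `∑ |choiVec K⟩⟨choiVec K|`. -/
def choiVec (K : M3) : Fin 3 × Fin 3 → ℂ := fun p => K p.2 p.1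

def choi (α : ℝ) : M9 := rankTwo (choiVec (E α)) (choiVec (D α))

lemma choiVec_E (α : ℝ) : choiVec (E α) = twoPoint (1, 0) (2, 1) (Real.sin α) 1 := by
  funext p
  fin_cases p <;> simp [choiVec, E, ket, twoPoint]

lemma choiVec_D (α : ℝ) : choiVec (D α) = twoPoint (1, 2) (0, 1) (Real.cos α) 1 := by
  funext p
  fin_cases p <;> simp [choiVec, D, ket, twoPoint]

lemma ofReal_sqrt_one_add_sq_ne_zero (x : ℝ) : (√(1 + x ^ 2) : ℂ) ≠ 0 :=
  Complex.ofReal_ne_zero.2 (Real.sqrt_pos.2 (by positivity)).ne'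

lemma choiVec_E_eq_smul_u (α : ℝ) :
    choiVec (E α) = (√(1 + Real.sin α ^ 2) : ℂ) • u α := by
  have h := ofReal_sqrt_one_add_sq_ne_zero (Real.sin α)
  funext p
  fin_cases p <;> simp [choiVec, E, ket, u, h, mul_div_cancel₀]

lemma choiVec_D_eq_smul_v (α : ℝ) :
    choiVec (D α) = (√(1 + Real.cos α ^ 2) : ℂ) • v α := by
  have h := ofReal_sqrt_one_add_sq_ne_zero (Real.cos α)
  funext p
  fin_cases p <;> simp [choiVec, D, ket, v, h, mul_div_cancel₀]

lemma exists_choi_eq_rankTwo_smul (α : ℝ) : ∃ k l : ℂ, choi α = rankTwo (k • u α) (l • v α) :=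
  ⟨_, _, by rw [choi, choiVec_E_eq_smul_u, choiVec_D_eq_smul_v]⟩

lemma exists_Pproj_eq_rankTwo_smul (α : ℝ) :
    ∃ k l : ℂ, Pproj α = rankTwo (k • choiVec (E α)) (l • choiVec (D α)) := by
  refine ⟨(√(1 + Real.sin α ^ 2) : ℂ)⁻¹, (√(1 + Real.cos α ^ 2) : ℂ)⁻¹, ?_⟩
  rw [choiVec_E_eq_smul_u, choiVec_D_eq_smul_v, smul_smul, smul_smul,
    inv_mul_cancel₀ (ofReal_sqrt_one_add_sq_ne_zero _),
    inv_mul_cancel₀ (ofReal_sqrt_one_add_sq_ne_zero _), one_smul, one_smul]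
  rfl

lemma trB_choi (α : ℝ) : trB (choi α) = 1 := by
  have hsc : (Real.sin α : ℂ) ^ 2 + (Real.cos α : ℂ) ^ 2 = 1 := by
    exact_mod_cast Real.sin_sq_add_cos_sq α
  rw [choi, choiVec_E, choiVec_D]
  generalize Real.sin α = s, Real.cos α = c at hsc ⊢
  ext i j
  fin_cases i <;> fin_cases j <;>
    simp [trB, rankTwo, twoPoint, Fin.sum_univ_three, one_apply, vecMulVec_apply, Pi.single_apply,
      ← sq, hsc]

lemma trace_diagonal_two_mul_sq_eq_four {a b : ℝ} (h : a ^ 2 + b ^ 2 = 1) :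
    (diagonal fun k => ((![2 * a ^ 2, 2, 2 * b ^ 2] k : ℝ) : ℂ)).trace = 4 := by
  have hC : (a : ℂ) ^ 2 + (b : ℂ) ^ 2 = 1 := by exact_mod_cast h
  simp [trace, Fin.sum_univ_three]
  linear_combination 2 * hC

def dualT (α : ℝ) : M3 :=
  diagonal fun k => ((![2 * Real.sin α ^ 2, 2, 2 * Real.cos α ^ 2] k : ℝ) : ℂ)

lemma trace_dualT (α : ℝ) : (dualT α).trace = 4 :=
  trace_diagonal_two_mul_sq_eq_four (Real.sin_sq_add_cos_sq α)

lemma posSemidef_one_kronecker_dualT_sub_choi (α : ℝ) :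
    ((1 : M3) ⊗ₖ dualT α - choi α).PosSemidef := by
  have hT : (1 : M3) ⊗ₖ dualT α =
      diagonal fun p => ((![2 * Real.sin α ^ 2, 2, 2 * Real.cos α ^ 2] p.2 : ℝ) : ℂ) := by
    rw [dualT, ← diagonal_one, diagonal_kronecker_diagonal]
    simp
  rw [hT, choi, choiVec_E, choiVec_D]
  generalize Real.sin α = s, Real.cos α = c
  refine posSemidef_diagonal_sub_rankTwo_twoPoint (by decide) (by decide) _ _ _ _ _ fun p => ?_
  fin_cases p <;> simp [twoPoint] <;> positivity

def witnessR (α : ℝ) : M3 :=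
  diagonal fun k => ((![2 * Real.cos α ^ 2, 2, 2 * Real.sin α ^ 2] k : ℝ) : ℂ)

def witnessU (α : ℝ) : M9 :=
  rankTwo (twoPoint (1, 0) (2, 1) 1 (Real.sin α)) (twoPoint (1, 2) (0, 1) 1 (Real.cos α))

lemma trace_witnessR (α : ℝ) : (witnessR α).trace = 4 :=
  trace_diagonal_two_mul_sq_eq_four (Real.cos_sq_add_sin_sq α)

lemma trA_witnessU (α : ℝ) : trA (witnessU α) = 1 := by
  have hsc : (Real.cos α : ℂ) ^ 2 + (Real.sin α : ℂ) ^ 2 = 1 := by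
    exact_mod_cast Real.cos_sq_add_sin_sq α
  rw [witnessU]
  generalize Real.sin α = s, Real.cos α = c at hsc ⊢
  ext i j
  fin_cases i <;> fin_cases j <;>
    simp [trA, rankTwo, twoPoint, Fin.sum_univ_three, one_apply, vecMulVec_apply, Pi.single_apply,
      ← sq, hsc]

lemma posSemidef_witnessR_kronecker_one_sub_witnessU (α : ℝ) :
    (witnessR α ⊗ₖ (1 : M3) - witnessU α).PosSemidef := by
  have hR : witnessR α ⊗ₖ (1 : M3) =
      diagonal fun p => ((![2 * Real.cos α ^ 2, 2, 2 * Real.sin α ^ 2] p.1 : ℝ) : ℂ) := by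
    rw [witnessR, ← diagonal_one, diagonal_kronecker_diagonal]
    simp
  rw [hR, witnessU]
  generalize Real.sin α = s, Real.cos α = c
  refine posSemidef_diagonal_sub_rankTwo_twoPoint (by decide) (by decide) _ _ _ _ _ fun p => ?_
  fin_cases p <;> simp [twoPoint] <;> positivity

lemma trace_choi_mul_witnessR_kronecker_one_sub_witnessU (α : ℝ) :
    (choi α * (witnessR α ⊗ₖ (1 : M3) - witnessU α)).trace = 0 := by
  have hker : (witnessR α ⊗ₖ (1 : M3) - witnessU α) *ᵥ choiVec (E α) = 0 ∧
      (witnessR α ⊗ₖ (1 : M3) - witnessU α) *ᵥ choiVec (D α) = 0 := by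
    rw [choiVec_E, choiVec_D, witnessR, witnessU]
    generalize Real.sin α = s, Real.cos α = c
    constructor <;> funext p <;> fin_cases p <;>
      simp [rankTwo, twoPoint, mulVec, dotProduct, Fintype.sum_prod_type, Fin.sum_univ_three,
        vecMulVec_apply, Pi.single_apply, diagonal_apply, one_apply] <;> ring
  rw [choi, trace_rankTwo_mul, hker.1, hker.2]
  simp

theorem ns_capacity_eq_four_general (α : ℝ) :
    IsGreatest {x : ℝ | ∃ (R : M3) (U : M9),
      U.PosSemidef ∧ (R ⊗ₖ (1 : M3) - U).PosSemidef ∧ trA U = 1 ∧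
      (Pproj α * (R ⊗ₖ (1 : M3) - U)).trace = 0 ∧ x = (R.trace).re} 4 := by
  refine ⟨⟨witnessR α, witnessU α, posSemidef_rankTwo _ _,
    posSemidef_witnessR_kronecker_one_sub_witnessU α, trA_witnessU α, ?_,
    by simp [trace_witnessR]⟩, ?_⟩
  · obtain ⟨k, l, hP⟩ := exists_Pproj_eq_rankTwo_smul α
    rw [hP]
    exact (posSemidef_witnessR_kronecker_one_sub_witnessU α).trace_rankTwo_smul_mul_eq_zero
      (trace_choi_mul_witnessR_kronecker_one_sub_witnessU α) k l
  · rintro x ⟨R, U, hU, hΔ, hU₁, hP, rfl⟩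
    obtain ⟨k, l, hJ⟩ := exists_choi_eq_rankTwo_smul α
    have hJΔ : (choi α * (R ⊗ₖ (1 : M3) - U)).trace = 0 := by
      rw [hJ]
      exact hΔ.trace_rankTwo_smul_mul_eq_zero hP k l
    have hle := trace_le_trace_of_dual_feasible hU hU₁ (trB_choi α)
      (posSemidef_one_kronecker_dualT_sub_choi α) hJΔ
    rw [trace_dualT] at hle
    simpa using (Complex.le_def.1 hle).1

/-- The one-shot NS-assisted zero-error capacity SDP value Υ(N_α) equals 4. -/
theorem ns_capacity_eq_four (α : ℝ) (hα : 0 < α) (hα' : α ≤ Real.pi / 4) :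
    IsGreatest {x : ℝ | ∃ (R : M3) (U : M9),
      U.PosSemidef ∧ (R ⊗ₖ (1 : M3) - U).PosSemidef ∧ trA U = 1 ∧
      (Pproj α * (R ⊗ₖ (1 : M3) - U)).trace = 0 ∧ x = (R.trace).re} 4 :=
  ns_capacity_eq_four_general α
end
end

section
/- Weak duality between zero-error capacity and simulation cost: for any quantum channel N with Choi matrix J_{AB} and support projection P_{AB}, if (R_A, U_{AB}) satisfies 0 ≤ U_{AB} ≤ R_A ⊗ I_B, tr_A U_{AB} = I_B, tr P_{AB}(R_A ⊗ I_B − U_{AB}) = 0, and T_B ≥ 0 satisfies I_A ⊗ T_B ≥ J_{AB}, then tr R_A ≤ tr T_B. -/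
open Matrix Kronecker Complex ComplexOrder

noncomputable section

/-- Partial trace over the first factor. -/
def trAg {a b : Type*} [Fintype a] (M : Matrix (a × b) (a × b) ℂ) : Matrix b b ℂ :=
  fun i j => ∑ k, M (k, i) (k, j)

/-- Partial trace over the second factor. -/
def trBg {a b : Type*} [Fintype b] (M : Matrix (a × b) (a × b) ℂ) : Matrix a a ℂ :=
  fun i j => ∑ k, M (i, k) (j, k)

/-!
Write `D = R ⊗ I - U ≥ 0`. Since `D ≥ 0`, `P ≥ 0` and `tr (P D) = 0`, we get `D P = 0`,
hence `D J = 0` because `J` has range inside that of `P`. Trace preservation `tr_B J = I` then gives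
`tr R = tr ((R ⊗ I) J) = tr (U J)`, while `tr_A U = I` gives
`tr T = tr ((I ⊗ T) U) = tr (J U) + tr ((I ⊗ T - J) U) ≥ tr (J U)`,
the last term being the trace of a product of two positive semidefinite matrices.
-/

namespace Matrix

variable {n : Type*} [Fintype n]

open scoped MatrixOrder in
theorem PosSemidef.exists_eq_conjTranspose_mul_self [DecidableEq n] {A : Matrix n n ℂ}
    (hA : A.PosSemidef) : ∃ B : Matrix n n ℂ, A = Bᴴ * B :=
  CStarAlgebra.nonneg_iff_eq_star_mul_self.mp hA.nonneg

theorem PosSemidef.trace_mul_nonneg_s6 [DecidableEq n] {A B : Matrix n n ℂ}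
    (hA : A.PosSemidef) (hB : B.PosSemidef) : 0 ≤ (A * B).trace := by
  obtain ⟨C, rfl⟩ := hB.exists_eq_conjTranspose_mul_self
  rw [← mul_assoc, trace_mul_cycle]
  exact (hA.mul_mul_conjTranspose_same C).trace_nonneg

theorem PosSemidef.mul_eq_zero_of_trace_mul_eq_zero [DecidableEq n] {D P : Matrix n n ℂ}
    (hD : D.PosSemidef) (hP : P.PosSemidef) (h : (P * D).trace = 0) : D * P = 0 := by
  obtain ⟨B, rfl⟩ := hD.exists_eq_conjTranspose_mul_self
  obtain ⟨C, rfl⟩ := hP.exists_eq_conjTranspose_mul_self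
  have hBC : B * Cᴴ = 0 := by
    rw [← trace_conjTranspose_mul_self_eq_zero_iff, ← h, conjTranspose_mul,
      conjTranspose_conjTranspose, trace_mul_comm (Cᴴ * C), mul_assoc, trace_mul_comm C]
    simp only [mul_assoc]
  rw [mul_assoc, ← mul_assoc B, hBC, zero_mul, mul_zero]

theorem IsHermitian.posSemidef_of_mul_self_eq_self {P : Matrix n n ℂ} (hP : P.IsHermitian)
    (hPP : P * P = P) : P.PosSemidef := by
  simpa [hP.eq, hPP] using posSemidef_conjTranspose_mul_self P

theorem mul_eq_zero_of_range_toLin'_le [DecidableEq n] {D P J : Matrix n n ℂ}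
    (hJP : LinearMap.range (toLin' J) ≤ LinearMap.range (toLin' P)) (hDP : D * P = 0) :
    D * J = 0 := by
  have hP : LinearMap.range (toLin' P) ≤ LinearMap.ker (toLin' D) := by
    rw [LinearMap.range_le_ker_iff, ← toLin'_mul, hDP, map_zero]
  apply toLin'.injective
  rw [toLin'_mul, map_zero, ← LinearMap.range_le_ker_iff]
  exact hJP.trans hP

end Matrix

section PartialTrace

variable {a b : Type*} [Fintype a] [Fintype b]

theorem trace_kronecker_one_mul [DecidableEq b] (R : Matrix a a ℂ)
    (J : Matrix (a × b) (a × b) ℂ) :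
    ((R ⊗ₖ (1 : Matrix b b ℂ)) * J).trace = (R * trBg J).trace := by
  simp only [trace, diag, mul_apply, kroneckerMap_apply, one_apply, trBg, Fintype.sum_prod_type,
    mul_ite, mul_one, mul_zero, ite_mul, zero_mul, Finset.sum_ite_eq, Finset.mem_univ, if_true,
    Finset.mul_sum]
  exact Finset.sum_congr rfl fun i _ => Finset.sum_comm

theorem trace_one_kronecker_mul_s6 [DecidableEq a] (T : Matrix b b ℂ)
    (U : Matrix (a × b) (a × b) ℂ) :
    (((1 : Matrix a a ℂ) ⊗ₖ T) * U).trace = (T * trAg U).trace := by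
  simp only [trace, diag, mul_apply, kroneckerMap_apply, one_apply, trAg, Fintype.sum_prod_type,
    ite_mul, one_mul, zero_mul, Finset.mul_sum]
  rw [Finset.sum_comm]
  refine Finset.sum_congr rfl fun k _ => ?_
  simp only [Finset.sum_comm (γ := a), Finset.sum_ite_eq, Finset.mem_univ, if_true]

end PartialTrace

theorem capacity_le_simulation_general {a b : ℕ}
    (J P : Matrix (Fin a × Fin b) (Fin a × Fin b) ℂ)
    (hTP : trBg J = 1)
    (hPherm : P.IsHermitian) (hPproj : P * P = P)
    (hPsupp : LinearMap.range (Matrix.toLin' P) = LinearMap.range (Matrix.toLin' J))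
    (R : Matrix (Fin a) (Fin a) ℂ) (U : Matrix (Fin a × Fin b) (Fin a × Fin b) ℂ)
    (T : Matrix (Fin b) (Fin b) ℂ)
    (hU : U.PosSemidef)
    (hRU : (R ⊗ₖ (1 : Matrix (Fin b) (Fin b) ℂ) - U).PosSemidef)
    (hUtr : trAg U = 1)
    (hPRU : (P * (R ⊗ₖ (1 : Matrix (Fin b) (Fin b) ℂ) - U)).trace = 0)
    (hTJ : ((1 : Matrix (Fin a) (Fin a) ℂ) ⊗ₖ T - J).PosSemidef) :
    (R.trace).re ≤ (T.trace).re := by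
  have hDP : (R ⊗ₖ (1 : Matrix (Fin b) (Fin b) ℂ) - U) * P = 0 :=
    hRU.mul_eq_zero_of_trace_mul_eq_zero (hPherm.posSemidef_of_mul_self_eq_self hPproj) hPRU
  have hDJ : (R ⊗ₖ (1 : Matrix (Fin b) (Fin b) ℂ) - U) * J = 0 :=
    mul_eq_zero_of_range_toLin'_le hPsupp.ge hDP
  have hR : R.trace = (U * J).trace := by
    rw [← mul_one R, ← hTP, ← trace_kronecker_one_mul, ← sub_add_cancel (R ⊗ₖ 1) U, add_mul,
      hDJ, zero_add]
  have hT : T.trace = (J * U).trace + ((1 ⊗ₖ T - J) * U).trace := by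
    rw [← trace_add, ← add_mul, add_sub_cancel, trace_one_kronecker_mul_s6, hUtr, mul_one]
  apply Complex.re_le_re
  rw [hR, hT, trace_mul_comm U]
  exact le_add_of_nonneg_right (hTJ.trace_mul_nonneg_s6 hU)

/-- Weak duality between the NS-assisted zero-error capacity SDP and the
simulation-cost SDP, for any channel with Choi matrix `J` (CP: `J ≥ 0`,
TP: `tr_B J = I_A`) and support projection `P`. -/
theorem capacity_le_simulation {a b : ℕ}
    (J P : Matrix (Fin a × Fin b) (Fin a × Fin b) ℂ)
    (hJ : J.PosSemidef) (hTP : trBg J = 1)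
    (hPherm : P.IsHermitian) (hPproj : P * P = P)
    (hPsupp : LinearMap.range (Matrix.toLin' P) = LinearMap.range (Matrix.toLin' J))
    (R : Matrix (Fin a) (Fin a) ℂ) (U : Matrix (Fin a × Fin b) (Fin a × Fin b) ℂ)
    (T : Matrix (Fin b) (Fin b) ℂ)
    (hU : U.PosSemidef)
    (hRU : (R ⊗ₖ (1 : Matrix (Fin b) (Fin b) ℂ) - U).PosSemidef)
    (hUtr : trAg U = 1)
    (hPRU : (P * (R ⊗ₖ (1 : Matrix (Fin b) (Fin b) ℂ) - U)).trace = 0)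
    (hT : T.PosSemidef)
    (hTJ : ((1 : Matrix (Fin a) (Fin a) ℂ) ⊗ₖ T - J).PosSemidef) :
    (R.trace).re ≤ (T.trace).re :=
  capacity_le_simulation_general J P hTP hPherm hPproj hPsupp R U T hU hRU hUtr hPRU hTJ
end
end

section
/- For 0 < α ≤ π/4, let ρ = (cos²α |0⟩⟨0| + |1⟩⟨1|)/(1+cos²α), T₁ = (1/(1+cos²α))(|0⟩⟨0| − (1/cos²α)|1⟩⟨1| + (sin²α/cos²α)|2⟩⟨2|), T₂ = cos⁴α |0⟩⟨0| − |1⟩⟨1|, R = |00⟩⟨11| + |11⟩⟨00|, and T = T₁ ⊗ T₂ + R. Then I ⊗ ρ + T is positive semidefinite. -/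
open Matrix Kronecker Complex ComplexOrder

noncomputable section

def ρmat (α : ℝ) : M3 :=
  ((Real.cos α ^ 2 / (1 + Real.cos α ^ 2) : ℝ) : ℂ) • ket 0 0 +
  ((1 / (1 + Real.cos α ^ 2) : ℝ) : ℂ) • ket 1 1

def T1 (α : ℝ) : M3 :=
  ((1 / (1 + Real.cos α ^ 2) : ℝ) : ℂ) •
    (ket 0 0 - (1 / Real.cos α ^ 2 : ℂ) • ket 1 1 + (Real.sin α ^ 2 / Real.cos α ^ 2 : ℂ) • ket 2 2)

def T2 (α : ℝ) : M3 := (Real.cos α ^ 4 : ℂ) • ket 0 0 - ket 1 1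

def Rmat : M9 := ket 0 1 ⊗ₖ ket 0 1 + ket 1 0 ⊗ₖ ket 1 0

def Tmat (α : ℝ) : M9 := T1 α ⊗ₖ T2 α + Rmat


def wvec (α : ℝ) : Fin 3 × Fin 3 → ℂ := fun p =>
  ((if p = (0,0) then Real.cos α else 0) +
   (if p = (1,1) then 1 / Real.cos α else 0) : ℝ)

def dvec (α : ℝ) : Fin 3 × Fin 3 → ℂ := fun p =>
  ((if p = (2,0) then Real.cos α ^ 2 * (1 + Real.sin α ^ 2) / (1 + Real.cos α ^ 2) else 0) +
   (if p = (2,1) then (Real.cos α ^ 2 - Real.sin α ^ 2) / (Real.cos α ^ 2 * (1 + Real.cos α ^ 2)) else 0) : ℝ)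

set_option maxHeartbeats 2000000 in
lemma key_decomp (α : ℝ) (hα : 0 < α) (hα' : α ≤ Real.pi / 4) :
    ((1 : M3) ⊗ₖ ρmat α + Tmat α) =
      Matrix.diagonal (dvec α) + vecMulVec (wvec α) (star (wvec α)) := by
  have hc : 0 < Real.cos α := Real.cos_pos_of_mem_Ioo ⟨by linarith [Real.pi_pos], by
    linarith [Real.pi_pos]⟩
  have h1c : (1 : ℝ) + Real.cos α ^ 2 ≠ 0 := by positivity
  have hs : Real.sin α ^ 2 = 1 - Real.cos α ^ 2 := by
    have := Real.sin_sq_add_cos_sq α; linarith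
  ext ⟨i, j⟩ ⟨k, l⟩
  fin_cases i <;> fin_cases j <;> fin_cases k <;> fin_cases l <;>
    simp [ρmat, Tmat, T1, T2, Rmat, ket, wvec, dvec, Matrix.single,
      Matrix.kroneckerMap_apply, Matrix.one_apply, Matrix.diagonal, vecMulVec,
      Prod.ext_iff] <;>
    norm_cast <;> field_simp <;> nlinarith [hs, hc]

theorem lovasz_primal_psd (α : ℝ) (hα : 0 < α) (hα' : α ≤ Real.pi / 4) :
    ((1 : M3) ⊗ₖ ρmat α + Tmat α).PosSemidef := by
  have hc : 0 < Real.cos α := Real.cos_pos_of_mem_Ioo ⟨by linarith [Real.pi_pos], by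
    linarith [Real.pi_pos]⟩
  have hcs : 0 ≤ Real.cos α ^ 2 - Real.sin α ^ 2 := by
    have h2 : Real.cos (2 * α) = 2 * Real.cos α ^ 2 - 1 := Real.cos_two_mul α
    have hnn : 0 ≤ Real.cos (2 * α) :=
      Real.cos_nonneg_of_mem_Icc ⟨by linarith [Real.pi_pos], by linarith⟩
    have hs : Real.sin α ^ 2 = 1 - Real.cos α ^ 2 := by
      have := Real.sin_sq_add_cos_sq α; linarith
    linarith
  rw [key_decomp α hα hα']
  apply Matrix.PosSemidef.add
  · refine Matrix.posSemidef_diagonal_iff.mpr fun p => ?_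
    rw [dvec, Complex.zero_le_real]
    split_ifs <;>
      first
        | positivity
        | (simp only [add_zero, zero_add]; positivity)
        | (simp only [add_zero, zero_add]
           exact div_nonneg hcs (by positivity))
        | simp
  · rw [Matrix.vecMulVec_eq Unit, ← Matrix.conjTranspose_replicateCol]
    exact Matrix.posSemidef_self_mul_conjTranspose _
end
end

section
/- For 0 < α ≤ π/4, the four operators E_α† E_α, E_α† D_α, D_α† E_α, D_α† D_α are linearly independent over C, where E_α = sin α |0⟩⟨1| + |1⟩⟨2| and D_α = cos α |2⟩⟨1| + |1⟩⟨0| (hence the channel N_α is extremal). -/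
open Matrix Kronecker Complex ComplexOrder

noncomputable section

/-! Each of the four products has an entry in which it alone is nonzero, equal to `1`:
`E†E` at `(2,2)`, `E†D = |2⟩⟨0|`, `D†E = |0⟩⟨2|`, `D†D` at `(0,0)`. -/

theorem Matrix.linearIndependent_of_apply_eq_single {ι m n R : Type*} [Semiring R]
    [DecidableEq ι] (M : ι → Matrix m n R) (r : ι → m) (c : ι → n)
    (h : ∀ k l, M k (r l) (c l) = (Pi.single k 1 : ι → R) l) :
    LinearIndependent R M := by
  let entries : Matrix m n R →ₗ[R] ι → R :=
    LinearMap.pi fun l => entryLinearMap R R (r l) (c l)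
  refine LinearIndependent.of_comp entries ?_
  convert Pi.linearIndependent_single_one ι R using 1
  ext k l
  exact h k l

theorem E_conjTranspose_mul_E (α : ℝ) :
    (E α)ᴴ * E α = (Real.sin α ^ 2 : ℂ) • ket 1 1 + ket 2 2 := by
  ext i j
  fin_cases i <;> fin_cases j <;>
    simp [E, ket, mul_apply, conjTranspose_apply, single, sq, -ofReal_sin, conj_ofReal]

theorem E_conjTranspose_mul_D (α : ℝ) : (E α)ᴴ * D α = ket 2 0 := by
  ext i j
  fin_cases i <;> fin_cases j <;>
    simp [E, D, ket, mul_apply, conjTranspose_apply, single]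

theorem D_conjTranspose_mul_E (α : ℝ) : (D α)ᴴ * E α = ket 0 2 := by
  ext i j
  fin_cases i <;> fin_cases j <;>
    simp [E, D, ket, mul_apply, conjTranspose_apply, single]

theorem D_conjTranspose_mul_D (α : ℝ) :
    (D α)ᴴ * D α = (Real.cos α ^ 2 : ℂ) • ket 1 1 + ket 0 0 := by
  ext i j
  fin_cases i <;> fin_cases j <;>
    simp [D, ket, mul_apply, conjTranspose_apply, single, sq, -ofReal_cos, conj_ofReal]

theorem kraus_products_linearIndependent_general (α : ℝ) :
    LinearIndependent ℂ
      ![(E α)ᴴ * E α, (E α)ᴴ * D α, (D α)ᴴ * E α, (D α)ᴴ * D α] := by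
  rw [E_conjTranspose_mul_E, E_conjTranspose_mul_D, D_conjTranspose_mul_E,
    D_conjTranspose_mul_D]
  refine Matrix.linearIndependent_of_apply_eq_single _ ![2, 2, 0, 0] ![2, 0, 2, 0] ?_
  intro k l
  fin_cases k <;> fin_cases l <;> simp [ket, single]

theorem kraus_products_linearIndependent (α : ℝ) (hα : 0 < α) (hα' : α ≤ Real.pi / 4) :
    LinearIndependent ℂ
      ![(E α)ᴴ * E α, (E α)ᴴ * D α, (D α)ᴴ * E α, (D α)ᴴ * D α] :=
  kraus_products_linearIndependent_general α
end
end
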